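/- Fix α > 0 and let g belong to the class S_α(ℝ). Let T_t^α g be defined for t > 0 by the explicit formulas: T_t^α g(u) = (4πt)^{−1/2} { ∫_ℝ e^{−(u−y)²/(4t)} g_even(y) dy + e^{2αu} ∫_u^{∞} e^{−2αz} ∫_0^{∞} [ ((z−y+4αt)/(2t)) e^{−(z−y)²/(4t)} + ((z+y−4αt)/(2t)) e^{−(z+y)²/(4t)} ] g_odd(y) dy dz } for u > 0, and T_t^α g(u) = (4πt)^{−1/2} { ∫_ℝ e^{−(u−y)²/(4t)} g_even(y) dy − e^{−2αu} ∫_{−u}^{∞} e^{−2αz} ∫_0^{∞} [ ((z−y+4αt)/(2t)) e^{−(z−y)²/(4t)} + ((z+y−4αt)/(2t)) e^{−(z+y)²/(4t)} ] g_odd(y) dy dz } for u < 0, where g_even(u) = (g(u)+g(−u))/2 and g_odd(u) = (g(u)−g(−u))/2. Then for every t > 0, the one-sided limits T_t^α g(0⁺), T_t^α g(0⁻), ∂_u T_t^α g(0⁺) and ∂_u T_t^α g(0⁻) exist and satisfy the Robin boundary condition ∂_u T_t^α g(0⁺) = ∂_u T_t^α g(0⁻) = α ( T_t^α g(0⁺)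 − T_t^α g(0⁻) ). -/

import Mathlib

open MeasureTheory Filter
open scoped BoundedContinuousFunction NNReal

/-- `f` belongs to the class `S_α(ℝ)` of test functions: smooth away from the origin,
continuous from the left at `0`, with fast decay of all derivatives, one-sided limits
of all derivatives at `0`, and satisfying the Robin-type boundary conditions
`f^{(2k+1)}(0⁺) = f^{(2k+1)}(0⁻) = α (f^{(2k)}(0⁺) − f^{(2k)}(0⁻))`. -/
structure IsSAlpha (α : ℝ) (f : ℝ → ℝ) : Prop where
  smooth : ContDiffOn ℝ (⊤ : ℕ∞) f {(0 : ℝ)}ᶜ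
  left_cont : Filter.Tendsto f (nhdsWithin 0 (Set.Iio 0)) (nhds (f 0))
  decay : ∀ k ℓ : ℕ, ∃ M : ℝ, ∀ u : ℝ, u ≠ 0 → (1 + |u| ^ ℓ) * |iteratedDeriv k f u| ≤ M
  robin : ∀ k : ℕ, ∃ Lp Lm Dp Dm : ℝ,
    Filter.Tendsto (iteratedDeriv (2 * k) f) (nhdsWithin 0 (Set.Ioi 0)) (nhds Lp) ∧
    Filter.Tendsto (iteratedDeriv (2 * k) f) (nhdsWithin 0 (Set.Iio 0)) (nhds Lm) ∧
    Filter.Tendsto (iteratedDeriv (2 * k + 1) f) (nhdsWithin 0 (Set.Ioi 0)) (nhds Dp) ∧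
    Filter.Tendsto (iteratedDeriv (2 * k + 1) f) (nhdsWithin 0 (Set.Iio 0)) (nhds Dm) ∧
    Dp = α * (Lp - Lm) ∧ Dm = α * (Lp - Lm)

/-- The explicit semigroup `T_t^α` associated with the heat equation with Robin boundary
condition at `0`, given by the formulas of Proposition 2.3. -/
noncomputable def Talpha (α : ℝ) (g : ℝ → ℝ) (t u : ℝ) : ℝ :=
  (Real.sqrt (4 * Real.pi * t))⁻¹ *
    ((∫ y : ℝ, Real.exp (-((u - y) ^ 2) / (4 * t)) * ((g y + g (-y)) / 2)) +
      if 0 < u then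
        Real.exp (2 * α * u) *
          ∫ z in Set.Ioi u, Real.exp (-(2 * α * z)) *
            ∫ y in Set.Ioi (0 : ℝ),
              (((z - y + 4 * α * t) / (2 * t)) * Real.exp (-((z - y) ^ 2) / (4 * t)) +
                ((z + y - 4 * α * t) / (2 * t)) * Real.exp (-((z + y) ^ 2) / (4 * t))) *
                ((g y - g (-y)) / 2)
      else
        -(Real.exp (-(2 * α * u)) *
          ∫ z in Set.Ioi (-u), Real.exp (-(2 * α * z)) *
            ∫ y in Set.Ioi (0 : ℝ),
              (((z - y + 4 * α * t) / (2 * t)) * Real.exp (-((z - y) ^ 2) / (4 * t)) +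
                ((z + y - 4 * α * t) / (2 * t)) * Real.exp (-((z + y) ^ 2) / (4 * t))) *
                ((g y - g (-y)) / 2)))

/-!
On each open half-line, `T_t^α g = c (A(u) ± e^{±2αu} R(±u))`, where `A` is the heat
convolution of the even part of `g` and `R(v) = ∫_v^∞ φ` is a tail integral whose integrand
vanishes at `0`, because the Robin kernel vanishes at `z = 0`. Both expressions extend as
`C¹` functions across `0`. Since `A` is even, `A'(0) = 0`; so the jump at `0` is `2 c R(0)` and
both one-sided derivatives equal `2 α c R(0)`.
-/

open Set Topology

theorem IsSAlpha.integrable {α : ℝ} {f : ℝ → ℝ} (hf : IsSAlpha α f) : Integrable f := by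
  obtain ⟨M, hM⟩ := hf.decay 0 2
  have hmeas : AEStronglyMeasurable f volume := by
    rw [← restrict_compl_singleton (μ := volume) (0 : ℝ)]
    exact hf.smooth.continuousOn.aestronglyMeasurable (measurableSet_singleton 0).compl
  refine (integrable_inv_one_add_sq.const_mul M).mono' hmeas ?_
  filter_upwards [compl_mem_ae_iff.2 (measure_singleton (μ := volume) (0 : ℝ))] with u hu
  have hMu := hM u hu
  rw [iteratedDeriv_zero, sq_abs] at hMu
  rw [Real.norm_eq_abs, ← div_eq_mul_inv, le_div_iff₀ (by positivity)]
  linarith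

theorem abs_mul_exp_neg_sq_div_le {t : ℝ} (ht : 0 < t) (x : ℝ) :
    |x| * Real.exp (-x ^ 2 / (4 * t)) ≤ Real.sqrt t := by
  have hx : |x| ≤ Real.sqrt t * (1 + x ^ 2 / (4 * t)) := by
    obtain ⟨s, hs, rfl⟩ : ∃ s, 0 < s ∧ s ^ 2 = t :=
      ⟨_, Real.sqrt_pos.2 ht, Real.sq_sqrt ht.le⟩
    rw [Real.sqrt_sq hs.le]
    field_simp
    nlinarith [sq_nonneg (|x| - 2 * s), sq_abs x]
  calc |x| * Real.exp (-x ^ 2 / (4 * t))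
      ≤ Real.sqrt t * (1 + x ^ 2 / (4 * t)) * Real.exp (-(x ^ 2 / (4 * t))) := by
        rw [neg_div]; gcongr
    _ ≤ Real.sqrt t * (Real.exp (x ^ 2 / (4 * t)) * Real.exp (-(x ^ 2 / (4 * t)))) := by
        rw [mul_assoc]; gcongr; linarith [Real.add_one_le_exp (x ^ 2 / (4 * t))]
    _ = Real.sqrt t := by rw [← Real.exp_add, add_neg_cancel, Real.exp_zero, mul_one]

theorem exp_neg_sq_div_le_one {t : ℝ} (ht : 0 < t) (x : ℝ) :
    Real.exp (-x ^ 2 / (4 * t)) ≤ 1 :=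
  Real.exp_le_one_iff.2 <|
    div_nonpos_of_nonpos_of_nonneg (neg_nonpos.2 (sq_nonneg x)) (by positivity)

theorem abs_affine_mul_exp_neg_sq_div_le {t : ℝ} (ht : 0 < t) (x c : ℝ) :
    |(x + c) / (2 * t) * Real.exp (-x ^ 2 / (4 * t))| ≤ (Real.sqrt t + |c|) / (2 * t) := by
  rw [abs_mul, abs_div, abs_of_pos (by positivity : (0 : ℝ) < 2 * t),
    abs_of_pos (Real.exp_pos _), div_mul_eq_mul_div]
  gcongr
  calc |x + c| * Real.exp (-x ^ 2 / (4 * t))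
      ≤ |x| * Real.exp (-x ^ 2 / (4 * t)) + |c| * Real.exp (-x ^ 2 / (4 * t)) := by
        rw [← add_mul]; gcongr; exact abs_add_le x c
    _ ≤ Real.sqrt t + |c| * 1 := by
        gcongr
        exacts [abs_mul_exp_neg_sq_div_le ht x, exp_neg_sq_div_le_one ht x]
    _ = Real.sqrt t + |c| := by rw [mul_one]

section ParametricIntegral

variable {μ : Measure ℝ} {φ : ℝ → ℝ}

theorem abs_integral_mul_le_of_abs_le {k : ℝ → ℝ} {C : ℝ} (hk : ∀ y, |k y| ≤ C)
    (hφ : Integrable φ μ) : |∫ y, k y * φ y ∂μ| ≤ ∫ y, C * |φ y| ∂μ := by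
  rw [← Real.norm_eq_abs]
  refine norm_integral_le_of_norm_le (hφ.norm.const_mul C) (ae_of_all _ fun y => ?_)
  rw [Real.norm_eq_abs, abs_mul]
  exact mul_le_mul_of_nonneg_right (hk y) (abs_nonneg _)

theorem continuous_integral_mul_of_abs_le {k : ℝ → ℝ → ℝ}
    (hk : Continuous (Function.uncurry k)) {C : ℝ} (hC : ∀ x y, |k x y| ≤ C)
    (hφ : Integrable φ μ) :
    Continuous fun x => ∫ y, k x y * φ y ∂μ := by
  refine continuous_of_dominated (bound := fun y => C * |φ y|)
    (fun x => ((hk.comp (continuous_const.prodMk continuous_id)).aestronglyMeasurable).mul hφ.1)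
    (fun x => ae_of_all _ fun y => ?_) (hφ.norm.const_mul C)
    (ae_of_all _ fun y => (hk.comp (continuous_id.prodMk continuous_const)).mul continuous_const)
  rw [Real.norm_eq_abs, abs_mul]
  exact mul_le_mul_of_nonneg_right (hC x y) (abs_nonneg _)

end ParametricIntegral

section GaussConv

variable {t : ℝ} {φ : ℝ → ℝ}

noncomputable def gaussConv (t : ℝ) (φ : ℝ → ℝ) (u : ℝ) : ℝ :=
  ∫ y, Real.exp (-(u - y) ^ 2 / (4 * t)) * φ y

noncomputable def gaussConvDeriv (t : ℝ) (φ : ℝ → ℝ) (u : ℝ) : ℝ :=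
  ∫ y, (y - u) / (2 * t) * Real.exp (-(u - y) ^ 2 / (4 * t)) * φ y

theorem abs_gaussKernelDeriv_le (ht : 0 < t) (u y : ℝ) :
    |(y - u) / (2 * t) * Real.exp (-(u - y) ^ 2 / (4 * t))| ≤ Real.sqrt t / (2 * t) := by
  simpa [neg_sub_comm, sub_sq_comm u y] using abs_affine_mul_exp_neg_sq_div_le ht (y - u) 0

theorem hasDerivAt_gaussConv (ht : 0 < t) (hφ : Integrable φ) (u : ℝ) :
    HasDerivAt (gaussConv t φ) (gaussConvDeriv t φ u) u := by
  have hkernel : ∀ x y : ℝ, HasDerivAt (fun x => Real.exp (-(x - y) ^ 2 / (4 * t)))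
      ((y - x) / (2 * t) * Real.exp (-(x - y) ^ 2 / (4 * t))) x := fun x y => by
    have hexponent : HasDerivAt (fun x => -(x - y) ^ 2 / (4 * t)) ((y - x) / (2 * t)) x := by
      refine ((((hasDerivAt_id' x).sub_const y).pow 2).neg.div_const (4 * t)).congr_deriv ?_
      field_simp
      ring
    simpa only [mul_comm] using hexponent.exp
  refine (hasDerivAt_integral_of_dominated_loc_of_deriv_le (x₀ := u) univ_mem
    (F := fun x y => Real.exp (-(x - y) ^ 2 / (4 * t)) * φ y)
    (F' := fun x y => (y - x) / (2 * t) * Real.exp (-(x - y) ^ 2 / (4 * t)) * φ y)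
    (bound := fun y => Real.sqrt t / (2 * t) * |φ y|)
    (Eventually.of_forall fun x => (by fun_prop : Continuous _).aestronglyMeasurable.mul hφ.1)
    (hφ.bdd_mul (c := 1) (by fun_prop : Continuous _).aestronglyMeasurable
      (ae_of_all _ fun y => ?_))
    ((by fun_prop : Continuous _).aestronglyMeasurable.mul hφ.1)
    (ae_of_all _ fun y x _ => ?_) (hφ.norm.const_mul _)
    (ae_of_all _ fun y x _ => (hkernel x y).mul_const (φ y))).2
  · rw [Real.norm_eq_abs, abs_of_pos (Real.exp_pos _)]
    exact exp_neg_sq_div_le_one ht _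
  · rw [Real.norm_eq_abs, abs_mul]
    exact mul_le_mul_of_nonneg_right (abs_gaussKernelDeriv_le ht x y) (abs_nonneg _)

theorem continuous_gaussConvDeriv (ht : 0 < t) (hφ : Integrable φ) :
    Continuous (gaussConvDeriv t φ) :=
  continuous_integral_mul_of_abs_le (by unfold Function.uncurry; fun_prop)
    (abs_gaussKernelDeriv_le ht) hφ

theorem gaussConvDeriv_zero_of_even (heven : ∀ y, φ (-y) = φ y) :
    gaussConvDeriv t φ 0 = 0 := by
  have hodd : gaussConvDeriv t φ 0 = -gaussConvDeriv t φ 0 := by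
    unfold gaussConvDeriv
    rw [← integral_neg, ← integral_neg_eq_self]
    congr 1 with y
    rw [heven]
    ring_nf
  linarith

end GaussConv

section RobinTail

variable {α t : ℝ} {ψ : ℝ → ℝ}

noncomputable def robinKernel (α t z y : ℝ) : ℝ :=
  (z - y + 4 * α * t) / (2 * t) * Real.exp (-(z - y) ^ 2 / (4 * t)) +
    (z + y - 4 * α * t) / (2 * t) * Real.exp (-(z + y) ^ 2 / (4 * t))

theorem robinKernel_zero_left (α t y : ℝ) : robinKernel α t 0 y = 0 := by
  rw [robinKernel, zero_sub, zero_add, neg_sq]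
  ring

theorem abs_robinKernel_le (ht : 0 < t) (z y : ℝ) :
    |robinKernel α t z y| ≤ (Real.sqrt t + |4 * α * t|) / t := by
  have h₁ := abs_affine_mul_exp_neg_sq_div_le ht (z - y) (4 * α * t)
  have h₂ := abs_affine_mul_exp_neg_sq_div_le ht (z + y) (-(4 * α * t))
  rw [abs_neg, ← sub_eq_add_neg] at h₂
  calc |robinKernel α t z y| ≤ _ := abs_add_le _ _
    _ ≤ (Real.sqrt t + |4 * α * t|) / (2 * t) + (Real.sqrt t + |4 * α * t|) / (2 * t) :=
        add_le_add h₁ h₂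
    _ = (Real.sqrt t + |4 * α * t|) / t := by ring

noncomputable def robinProfile (α t : ℝ) (ψ : ℝ → ℝ) (z : ℝ) : ℝ :=
  Real.exp (-(2 * α * z)) * ∫ y in Ioi (0 : ℝ), robinKernel α t z y * ψ y

theorem robinProfile_zero : robinProfile α t ψ 0 = 0 := by
  simp [robinProfile, robinKernel_zero_left]

theorem continuous_robinProfile (ht : 0 < t) (hψ : IntegrableOn ψ (Ioi 0)) :
    Continuous (robinProfile α t ψ) :=
  (by fun_prop : Continuous fun z : ℝ => Real.exp (-(2 * α * z))).mul
    (continuous_integral_mul_of_abs_le (by unfold robinKernel Function.uncurry; fun_prop)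
      (abs_robinKernel_le ht) hψ)

theorem integrableOn_robinProfile_Ioi (hα : 0 < α) (ht : 0 < t) (hψ : IntegrableOn ψ (Ioi 0))
    (a : ℝ) : IntegrableOn (robinProfile α t ψ) (Ioi a) := by
  refine ((exp_neg_integrableOn_Ioi a (by positivity : 0 < 2 * α)).mul_const
    (∫ y in Ioi 0, (Real.sqrt t + |4 * α * t|) / t * |ψ y|)).mono'
    (continuous_robinProfile ht hψ).aestronglyMeasurable (ae_of_all _ fun z => ?_)
  rw [robinProfile, Real.norm_eq_abs, abs_mul, abs_of_pos (Real.exp_pos _), neg_mul]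
  gcongr
  exact abs_integral_mul_le_of_abs_le (abs_robinKernel_le ht z) hψ

end RobinTail

theorem hasDerivAt_integral_Ioi {f : ℝ → ℝ} (hf : Continuous f)
    (hint : ∀ a, IntegrableOn f (Ioi a)) (v : ℝ) :
    HasDerivAt (fun w => ∫ x in Ioi w, f x) (-f v) v := by
  have hsplit :
      (fun w => ∫ x in Ioi w, f x) = fun w => (∫ x in Ioi 0, f x) - ∫ x in 0..w, f x := by
    funext w
    rw [← intervalIntegral.integral_Ioi_sub_Ioi' (hint 0) (hint w), sub_sub_cancel]
  rw [hsplit, ← zero_sub]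
  exact (hasDerivAt_const v _).sub (hf.integral_hasStrictDerivAt 0 v).hasDerivAt

theorem tendsto_and_tendsto_deriv_of_eqOn {f P P' : ℝ → ℝ} {s : Set ℝ} {x : ℝ}
    (hs : IsOpen s) (hfP : EqOn f P s) (hP : ∀ u, HasDerivAt P (P' u) u)
    (hP' : ContinuousAt P' x) :
    Tendsto f (𝓝[s] x) (𝓝 (P x)) ∧ Tendsto (deriv f) (𝓝[s] x) (𝓝 (P' x)) := by
  refine ⟨(hP x).continuousAt.continuousWithinAt.congr' ?_,
    hP'.continuousWithinAt.congr' ?_⟩ <;>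
    refine eventually_nhdsWithin_of_forall fun u hu => ?_
  · exact (hfP hu).symm
  · rw [(hfP.eventuallyEq_of_mem (hs.mem_nhds hu)).deriv_eq, (hP u).deriv]

theorem robin_condition_of_eq_reflected_tail {T A A' R φ : ℝ → ℝ} {c α : ℝ}
    (hA : ∀ u, HasDerivAt A (A' u) u) (hA' : ContinuousAt A' 0) (hA'0 : A' 0 = 0)
    (hR : ∀ v, HasDerivAt R (-φ v) v) (hφ : ContinuousAt φ 0) (hφ0 : φ 0 = 0)
    (hT : ∀ u, T u = c * (A u + if 0 < u then Real.exp (2 * α * u) * R u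
      else -(Real.exp (-(2 * α * u)) * R (-u)))) :
    ∃ Lp Lm d : ℝ, Tendsto T (𝓝[>] 0) (𝓝 Lp) ∧ Tendsto T (𝓝[<] 0) (𝓝 Lm) ∧
      Tendsto (deriv T) (𝓝[>] 0) (𝓝 d) ∧ Tendsto (deriv T) (𝓝[<] 0) (𝓝 d) ∧
      d = α * (Lp - Lm) := by
  have hRc : Continuous R := continuous_iff_continuousAt.2 fun v => (hR v).continuousAt
  have hφneg : ContinuousAt (fun u => -φ (-u) * -1) 0 :=
    ((hφ.comp_of_eq continuous_neg.continuousAt neg_zero).neg).mul continuousAt_const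
  have hE : ∀ (b u : ℝ), HasDerivAt (fun u => Real.exp (b * u)) (Real.exp (b * u) * b) u :=
    fun b u => by simpa using ((hasDerivAt_id' u).const_mul b).exp
  obtain ⟨hTp, hT'p⟩ := tendsto_and_tendsto_deriv_of_eqOn isOpen_Ioi (f := T)
    (P := fun u => c * (A u + Real.exp (2 * α * u) * R u))
    (fun u (hu : 0 < u) => by rw [hT, if_pos hu])
    (fun u => ((hA u).add ((hE _ u).mul (hR u))).const_mul c) (by fun_prop)
  obtain ⟨hTm, hT'm⟩ := tendsto_and_tendsto_deriv_of_eqOn isOpen_Iio (f := T)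
    (P := fun u => c * (A u - Real.exp (-(2 * α) * u) * R (-u)))
    (fun u (hu : u < 0) => by simp only [hT, if_neg hu.not_gt, neg_mul, sub_eq_add_neg])
    (fun u => ((hA u).sub ((hE _ u).mul ((hR (-u)).comp u (hasDerivAt_neg u)))).const_mul c)
    (by simp only [Function.comp_def]; fun_prop)
  refine ⟨_, _, _, hTp, hTm, hT'p, ?_, ?_⟩
  · convert hT'm using 2
    simp [hA'0, hφ0]
  · simp [hA'0, hφ0]
    ring

/-- **`T_t^α g` satisfies the Robin boundary condition at the origin** (part of
Proposition 2.3): for `g ∈ S_α(ℝ)` and `t > 0`, the one-sided limits `T_t^α g(0⁺)`,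
`T_t^α g(0⁻)`, `∂_u T_t^α g(0⁺)` and `∂_u T_t^α g(0⁻)` exist and satisfy
`∂_u T_t^α g(0⁺) = ∂_u T_t^α g(0⁻) = α (T_t^α g(0⁺) − T_t^α g(0⁻))`. -/
theorem Talpha_robin_boundary_condition
    (α : ℝ) (hα : 0 < α) (g : ℝ → ℝ) (hg : IsSAlpha α g) :
    ∀ t : ℝ, 0 < t → ∃ Lp Lm d : ℝ,
      Filter.Tendsto (fun u => Talpha α g t u) (nhdsWithin 0 (Set.Ioi 0)) (nhds Lp) ∧
      Filter.Tendsto (fun u => Talpha α g t u) (nhdsWithin 0 (Set.Iio 0)) (nhds Lm) ∧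
      Filter.Tendsto (deriv (fun u => Talpha α g t u)) (nhdsWithin 0 (Set.Ioi 0)) (nhds d) ∧
      Filter.Tendsto (deriv (fun u => Talpha α g t u)) (nhdsWithin 0 (Set.Iio 0)) (nhds d) ∧
      d = α * (Lp - Lm) := by
  intro t ht
  have hg_int : Integrable g := hg.integrable
  have heven : Integrable fun y => (g y + g (-y)) / 2 := (hg_int.add hg_int.comp_neg).div_const 2
  have hodd : IntegrableOn (fun y => (g y - g (-y)) / 2) (Ioi 0) :=
    ((hg_int.sub hg_int.comp_neg).div_const 2).integrableOn
  have hprofile := continuous_robinProfile (α := α) ht hodd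
  exact robin_condition_of_eq_reflected_tail (hasDerivAt_gaussConv ht heven)
    (continuous_gaussConvDeriv ht heven).continuousAt
    (gaussConvDeriv_zero_of_even fun y => by rw [neg_neg, add_comm])
    (hasDerivAt_integral_Ioi hprofile (integrableOn_robinProfile_Ioi hα ht hodd))
    hprofile.continuousAt robinProfile_zero fun u => rfl
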